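/- Let v(t,x) := (1/√(4πt)) ∫₀^∞ (e^{−(x−y)²/(4t)} − e^{−(x+y)²/(4t)}) v₀(y) dy for t > 0, x > 0, where v₀(x) = 1 for 0 < x ≤ 1 and v₀(x) = 1/x² for x > 1. Then there exist constants C₂ > C₁ > 0 and T > e such that C₁·x·(ln t)/t^{3/2} ≤ v(t,x) ≤ C₂·x·(ln t)/t^{3/2} for all t ≥ T and all x ∈ (1, ln t). -/

import Mathlib

/-!
With `a = (x - y)²/4t` and `b = (x + y)²/4t` one has `b - a = xy/t`, so convexity of `exp` gives
`(xy/t) e^{-b} ≤ e^{-a} - e^{-b} ≤ (xy/t) e^{-a}`. For the lower bound, restrict the integral to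
`1 < y ≤ √t`: there `x + y ≤ 2√t` (because `x < log t ≤ √t`), so `e^{-b} ≥ e^{-1}`, and
`v₀ y = 1/y²` leaves `e^{-1} (x/t) ∫₁^{√t} dy/y = e^{-1} x log t / 2t`. For the upper bound, on
`(0, t]` the Gaussian `e^{-a}` is at most `1` and `∫₀^t y v₀(y) dy = 1/2 + log t`, while on
`(t, ∞)` one has `y v₀(y) = 1/y ≤ 1/t` and the whole Gaussian integrates to `√(4πt)`.
Dividing by `√(4πt)` gives both bounds of order `x log t / t^{3/2}`.
-/

open Real Filter MeasureTheory Set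

noncomputable section

/-- The initial datum `v₀(x) = 1` for `0 < x ≤ 1`, `v₀(x) = 1/x²` for `x > 1`. -/
def v₀ (x : ℝ) : ℝ := if x ≤ 1 then 1 else 1 / x ^ 2

/-- The solution of the Dirichlet heat equation on the half-line with initial datum `v₀`. -/
def vheat (t x : ℝ) : ℝ :=
  (Real.sqrt (4 * Real.pi * t))⁻¹ *
    ∫ y in Set.Ioi (0 : ℝ),
      (Real.exp (-(x - y) ^ 2 / (4 * t)) - Real.exp (-(x + y) ^ 2 / (4 * t))) * v₀ y

lemma sub_mul_exp_le_exp_sub_exp (a b : ℝ) : (a - b) * exp b ≤ exp a - exp b := by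
  have h : exp a = exp b * exp (a - b) := by rw [← exp_add, add_sub_cancel]
  nlinarith [add_one_le_exp (a - b), exp_pos b]

lemma exp_sub_exp_le_sub_mul_exp (a b : ℝ) : exp a - exp b ≤ (a - b) * exp a := by
  linarith [sub_mul_exp_le_exp_sub_exp b a]

lemma log_le_half_self {s : ℝ} (hs : 0 < s) : log s ≤ s / 2 := by
  rw [log_le_iff_le_exp hs]
  nlinarith [quadratic_le_exp_of_nonneg (by positivity : 0 ≤ s / 2), sq_nonneg (s - 2)]

lemma log_le_sqrt {t : ℝ} (ht : 0 < t) : log t ≤ √t := by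
  have := log_le_half_self (sqrt_pos.2 ht)
  rw [log_sqrt ht.le] at this
  linarith

lemma rpow_three_halves {t : ℝ} (ht : 0 ≤ t) : t ^ ((3 : ℝ) / 2) = t * √t := by
  rw [show (3 : ℝ) / 2 = 1 + 1 / 2 by norm_num, rpow_add' ht (by norm_num), rpow_one,
    sqrt_eq_rpow]

lemma integrable_exp_neg_sq_div {t : ℝ} (ht : 0 < t) (x : ℝ) :
    Integrable fun y => exp (-(x - y) ^ 2 / (4 * t)) := by
  convert (integrable_exp_neg_mul_sq (by positivity : 0 < 1 / (4 * t))).comp_sub_right x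
    using 2 with y
  ring_nf

lemma integral_exp_neg_sq_div {t : ℝ} (ht : 0 < t) (x : ℝ) :
    ∫ y, exp (-(x - y) ^ 2 / (4 * t)) = √(4 * π * t) := by
  have h : (fun y => exp (-(x - y) ^ 2 / (4 * t))) =
      fun y => exp (-(1 / (4 * t)) * (y - x) ^ 2) := by
    funext y; ring_nf
  rw [h, integral_sub_right_eq_self (fun y => exp (-(1 / (4 * t)) * y ^ 2)) x, integral_gaussian]
  congr 1
  field_simp

lemma v₀_nonneg (y : ℝ) : 0 ≤ v₀ y := by
  unfold v₀; split <;> positivity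

lemma v₀_le_one (y : ℝ) : v₀ y ≤ 1 := by
  unfold v₀; split_ifs with hy
  · exact le_rfl
  · rw [div_le_one (by nlinarith)]; nlinarith

lemma v₀_of_one_le {y : ℝ} (hy : 1 ≤ y) : v₀ y = 1 / y ^ 2 := by
  unfold v₀; split <;> [simp [le_antisymm ‹y ≤ 1› hy]; rfl]

lemma mul_v₀_of_one_le {y : ℝ} (hy : 1 ≤ y) : y * v₀ y = y⁻¹ := by
  rw [v₀_of_one_le hy]; field_simp

lemma mul_v₀_le_one (y : ℝ) : y * v₀ y ≤ 1 := by
  rcases le_or_gt y 1 with hy | hy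
  · simp [v₀, hy]
  · rw [mul_v₀_of_one_le hy.le]; exact inv_le_one_of_one_le₀ hy.le

lemma continuous_v₀ : Continuous v₀ :=
  continuous_if_le continuous_id continuous_const continuousOn_const
    (continuousOn_const.div (continuousOn_id.pow 2) fun y hy => by
      have : (1 : ℝ) ≤ y := hy; positivity)
    fun y hy => by simp [hy]

lemma integral_mul_v₀ {t : ℝ} (ht : 1 ≤ t) : ∫ y in (0)..t, y * v₀ y = 1 / 2 + log t := by
  have hc : Continuous fun y => y * v₀ y := continuous_id.mul continuous_v₀
  rw [← intervalIntegral.integral_add_adjacent_intervals (hc.intervalIntegrable 0 1)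
    (hc.intervalIntegrable 1 t)]
  have h₁ : ∫ y in (0)..1, y * v₀ y = ∫ y in (0)..1, y :=
    intervalIntegral.integral_congr fun y hy => by
      rw [uIcc_of_le zero_le_one] at hy; simp [v₀, hy.2]
  have h₂ : ∫ y in (1)..t, y * v₀ y = ∫ y in (1)..t, y⁻¹ :=
    intervalIntegral.integral_congr fun y hy => by
      rw [uIcc_of_le ht] at hy; exact mul_v₀_of_one_le hy.1
  rw [h₁, h₂, integral_id, integral_inv_of_pos one_pos (by linarith)]
  norm_num

lemma one_le_sqrt_four_mul_pi : 1 ≤ √(4 * π) :=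
  one_le_sqrt.2 (by nlinarith [pi_gt_three])

def halfLineKernel (t x y : ℝ) : ℝ :=
  exp (-(x - y) ^ 2 / (4 * t)) - exp (-(x + y) ^ 2 / (4 * t))

lemma vheat_eq (t x : ℝ) :
    vheat t x = (√(4 * π * t))⁻¹ * ∫ y in Ioi 0, halfLineKernel t x y * v₀ y :=
  rfl

lemma neg_sq_div_sub_neg_sq_div (t x y : ℝ) :
    -(x - y) ^ 2 / (4 * t) - -(x + y) ^ 2 / (4 * t) = x * y / t := by
  ring

lemma halfLineKernel_le (t x y : ℝ) :
    halfLineKernel t x y ≤ x * y / t * exp (-(x - y) ^ 2 / (4 * t)) := by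
  rw [halfLineKernel, ← neg_sq_div_sub_neg_sq_div]
  exact exp_sub_exp_le_sub_mul_exp _ _

lemma mul_exp_le_halfLineKernel (t x y : ℝ) :
    x * y / t * exp (-(x + y) ^ 2 / (4 * t)) ≤ halfLineKernel t x y := by
  rw [halfLineKernel, ← neg_sq_div_sub_neg_sq_div]
  exact sub_mul_exp_le_exp_sub_exp _ _

lemma halfLineKernel_nonneg {t x y : ℝ} (ht : 0 < t) (hx : 0 ≤ x) (hy : 0 ≤ y) :
    0 ≤ halfLineKernel t x y :=
  (by positivity : 0 ≤ x * y / t * exp (-(x + y) ^ 2 / (4 * t))).trans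
    (mul_exp_le_halfLineKernel t x y)

lemma integrable_halfLineKernel_mul_v₀ {t : ℝ} (ht : 0 < t) (x : ℝ) :
    Integrable fun y => halfLineKernel t x y * v₀ y := by
  have hplus : Integrable fun y => exp (-(x + y) ^ 2 / (4 * t)) := by
    convert integrable_exp_neg_sq_div ht (-x) using 4 with y
    ring
  exact ((integrable_exp_neg_sq_div ht x).sub hplus).mul_bdd continuous_v₀.aestronglyMeasurable
    (ae_of_all _ fun y => by rw [norm_of_nonneg (v₀_nonneg y)]; exact v₀_le_one y)

lemma integrableOn_mul_v₀_mul {g : ℝ → ℝ} (hg : Integrable g) :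
    IntegrableOn (fun y => y * v₀ y * g y) (Ioi 0) :=
  hg.integrableOn.bdd_mul (continuous_id.mul continuous_v₀).aestronglyMeasurable
    ((ae_restrict_iff' measurableSet_Ioi).2 (ae_of_all _ fun y (hy : 0 < y) => by
      rw [norm_of_nonneg (mul_nonneg hy.le (v₀_nonneg y))]; exact mul_v₀_le_one y))

lemma setIntegral_mul_v₀_mul_le {g : ℝ → ℝ} (hg : Integrable g) (hg₀ : ∀ y, 0 ≤ g y)
    (hg₁ : ∀ y, g y ≤ 1) {t : ℝ} (ht : 1 ≤ t) :
    ∫ y in Ioi 0, y * v₀ y * g y ≤ 1 / 2 + log t + (∫ y, g y) / t := by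
  have ht₀ : 0 < t := one_pos.trans_le ht
  have hw := integrableOn_mul_v₀_mul hg
  have h₁ : ∫ y in Ioc 0 t, y * v₀ y * g y ≤ 1 / 2 + log t :=
    calc ∫ y in Ioc 0 t, y * v₀ y * g y ≤ ∫ y in Ioc 0 t, y * v₀ y :=
          setIntegral_mono_on (hw.mono_set Ioc_subset_Ioi_self)
            ((continuous_id.mul continuous_v₀).integrableOn_Icc.mono_set Ioc_subset_Icc_self)
            measurableSet_Ioc fun y hy =>
              mul_le_of_le_one_right (mul_nonneg hy.1.le (v₀_nonneg y)) (hg₁ y)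
      _ = 1 / 2 + log t := by
          rw [← intervalIntegral.integral_of_le ht₀.le, integral_mul_v₀ ht]
  have h₂ : ∫ y in Ioi t, y * v₀ y * g y ≤ (∫ y, g y) / t :=
    calc ∫ y in Ioi t, y * v₀ y * g y ≤ ∫ y in Ioi t, g y / t :=
          setIntegral_mono_on (hw.mono_set (Ioi_subset_Ioi ht₀.le)) (hg.integrableOn.div_const t)
            measurableSet_Ioi fun y (hy : t < y) => by
              rw [mul_v₀_of_one_le (ht.trans hy.le), inv_mul_eq_div]
              exact div_le_div_of_nonneg_left (hg₀ y) ht₀ hy.le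
      _ ≤ (∫ y, g y) / t := by
          rw [integral_div]
          exact div_le_div_of_nonneg_right (setIntegral_le_integral hg (ae_of_all _ hg₀)) ht₀.le
  rw [← Ioc_union_Ioi_eq_Ioi ht₀.le, setIntegral_union (Ioc_disjoint_Ioi le_rfl)
    measurableSet_Ioi (hw.mono_set Ioc_subset_Ioi_self) (hw.mono_set (Ioi_subset_Ioi ht₀.le))]
  linarith

lemma setIntegral_halfLineKernel_mul_v₀_le {t x : ℝ} (ht : 1 ≤ t) (hx : 0 ≤ x) :
    ∫ y in Ioi 0, halfLineKernel t x y * v₀ y ≤ x / t * (1 / 2 + log t + √(4 * π * t) / t) := by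
  have ht₀ : 0 < t := one_pos.trans_le ht
  have hg := integrable_exp_neg_sq_div ht₀ x
  have hg₁ (y : ℝ) : exp (-(x - y) ^ 2 / (4 * t)) ≤ 1 :=
    exp_le_one_iff.2 (div_nonpos_of_nonpos_of_nonneg (neg_nonpos.2 (sq_nonneg _)) (by positivity))
  have hweight := setIntegral_mul_v₀_mul_le hg (fun y => (exp_pos _).le) hg₁ ht
  rw [integral_exp_neg_sq_div ht₀] at hweight
  calc ∫ y in Ioi 0, halfLineKernel t x y * v₀ y
      ≤ ∫ y in Ioi 0, x / t * (y * v₀ y * exp (-(x - y) ^ 2 / (4 * t))) :=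
        setIntegral_mono (integrable_halfLineKernel_mul_v₀ ht₀ x).integrableOn
          ((integrableOn_mul_v₀_mul hg).const_mul _) fun y =>
            (mul_le_mul_of_nonneg_right (halfLineKernel_le t x y) (v₀_nonneg y)).trans_eq
              (by ring)
    _ = x / t * ∫ y in Ioi 0, y * v₀ y * exp (-(x - y) ^ 2 / (4 * t)) := integral_const_mul _ _
    _ ≤ x / t * (1 / 2 + log t + √(4 * π * t) / t) := by gcongr

lemma le_setIntegral_halfLineKernel_mul_v₀ {t x : ℝ} (ht : 1 ≤ t) (hx₀ : 0 ≤ x) (hx : x ≤ √t) :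
    exp (-1) * x / t * (log t / 2) ≤ ∫ y in Ioi 0, halfLineKernel t x y * v₀ y := by
  have ht₀ : 0 < t := one_pos.trans_le ht
  have hs : 1 ≤ √t := one_le_sqrt.2 ht
  have hK := (integrable_halfLineKernel_mul_v₀ ht₀ x).integrableOn (s := Ioi 0)
  have hinv : IntegrableOn (fun y : ℝ => y⁻¹) (Ioc 1 √t) :=
    (continuousOn_inv₀.mono fun y (hy : y ∈ Icc 1 √t) =>
      (one_pos.trans_le hy.1).ne').integrableOn_Icc.mono_set Ioc_subset_Icc_self
  calc exp (-1) * x / t * (log t / 2) = ∫ y in Ioc 1 √t, exp (-1) * x / t * y⁻¹ := by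
        rw [← intervalIntegral.integral_of_le hs, intervalIntegral.integral_const_mul,
          integral_inv_of_pos one_pos (by linarith), div_one, log_sqrt ht₀.le]
    _ ≤ ∫ y in Ioc 1 √t, halfLineKernel t x y * v₀ y :=
        setIntegral_mono_on (hinv.const_mul _) (hK.mono_set fun y hy => one_pos.trans hy.1)
          measurableSet_Ioc fun y hy => by
            have hy₀ : 0 < y := one_pos.trans hy.1
            -- `x + y ≤ 2 √t` keeps the Gaussian factor above `exp (-1)`
            have hexp : exp (-1) ≤ exp (-(x + y) ^ 2 / (4 * t)) := by
              rw [exp_le_exp, neg_div, neg_le_neg_iff, div_le_one (by positivity)]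
              nlinarith [sq_sqrt ht₀.le, hy.2]
            calc exp (-1) * x / t * y⁻¹ ≤ exp (-(x + y) ^ 2 / (4 * t)) * x / t * y⁻¹ := by
                  gcongr
              _ = x * y / t * exp (-(x + y) ^ 2 / (4 * t)) * v₀ y := by
                  rw [v₀_of_one_le hy.1.le]; field_simp
              _ ≤ halfLineKernel t x y * v₀ y :=
                  mul_le_mul_of_nonneg_right (mul_exp_le_halfLineKernel t x y) (v₀_nonneg y)
    _ ≤ ∫ y in Ioi 0, halfLineKernel t x y * v₀ y :=
        setIntegral_mono_set hK
          ((ae_restrict_iff' measurableSet_Ioi).2 (ae_of_all _ fun y (hy : 0 < y) =>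
            mul_nonneg (halfLineKernel_nonneg ht₀ hx₀ hy.le) (v₀_nonneg y)))
          (Eventually.of_forall fun y hy => one_pos.trans hy.1)

lemma le_vheat {t x : ℝ} (ht : 1 ≤ t) (hx₀ : 0 ≤ x) (hx : x ≤ √t) :
    exp (-1) / (2 * √(4 * π)) * (x * log t / (t * √t)) ≤ vheat t x := by
  have ht₀ : 0 < t := one_pos.trans_le ht
  rw [vheat_eq, sqrt_mul (by positivity : (0 : ℝ) ≤ 4 * π) t]
  calc exp (-1) / (2 * √(4 * π)) * (x * log t / (t * √t))
      = (√(4 * π) * √t)⁻¹ * (exp (-1) * x / t * (log t / 2)) := by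
        field_simp
    _ ≤ _ := mul_le_mul_of_nonneg_left (le_setIntegral_halfLineKernel_mul_v₀ ht hx₀ hx)
        (by positivity)

lemma vheat_le {t x : ℝ} (ht : exp 1 ≤ t) (hx₀ : 0 ≤ x) :
    vheat t x ≤ 3 * (x * log t / (t * √t)) := by
  have ht₁ : 1 ≤ t := (one_le_exp zero_le_one).trans ht
  have ht₀ : 0 < t := one_pos.trans_le ht₁
  have hs : 0 < √t := sqrt_pos.2 ht₀
  have hst : √t / t ≤ 1 := div_le_one_of_le₀ (sqrt_le_self_iff.2 (Or.inr ht₁)) ht₀.le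
  have hL : 1 ≤ log t := (le_log_iff_exp_le ht₀).2 ht
  have hP := one_le_sqrt_four_mul_pi
  rw [vheat_eq]
  calc (√(4 * π * t))⁻¹ * ∫ y in Ioi 0, halfLineKernel t x y * v₀ y
      ≤ (√(4 * π * t))⁻¹ * (x / t * (1 / 2 + log t + √(4 * π * t) / t)) :=
        mul_le_mul_of_nonneg_left (setIntegral_halfLineKernel_mul_v₀_le ht₁ hx₀) (by positivity)
    _ = x / (t * √t) * ((1 / 2 + log t) / √(4 * π) + √t / t) := by
        rw [sqrt_mul (by positivity : (0 : ℝ) ≤ 4 * π) t]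
        field_simp
    _ ≤ x / (t * √t) * (3 * log t) := by
        gcongr
        linarith [div_le_self (by linarith : 0 ≤ 1 / 2 + log t) hP]
    _ = 3 * (x * log t / (t * √t)) := by ring

/-- Lemma 5.4: two-sided estimate `v(t,x) ≍ x ln t / t^{3/2}` for `x ∈ (1, ln t)`. -/
theorem vheat_two_sided :
    ∃ C₁ C₂ T : ℝ, 0 < C₁ ∧ C₁ < C₂ ∧ Real.exp 1 < T ∧
      ∀ t : ℝ, T ≤ t → ∀ x : ℝ, 1 < x → x < Real.log t →
        C₁ * (x * Real.log t / t ^ ((3 : ℝ) / 2)) ≤ vheat t x ∧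
        vheat t x ≤ C₂ * (x * Real.log t / t ^ ((3 : ℝ) / 2)) := by
  have hC : exp (-1) / (2 * √(4 * π)) < 3 :=
    calc exp (-1) / (2 * √(4 * π)) ≤ exp (-1) / 2 :=
          div_le_div_of_nonneg_left (exp_pos _).le two_pos (by linarith [one_le_sqrt_four_mul_pi])
      _ < 3 := by linarith [exp_neg_one_lt_half]
  refine ⟨exp (-1) / (2 * √(4 * π)), 3, exp 2, by positivity, hC, exp_lt_exp.2 one_lt_two, ?_⟩
  intro t ht x hx₁ hxt
  have ht₁ : exp 1 ≤ t := (exp_le_exp.2 one_le_two).trans ht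
  have ht₀ : 0 < t := (exp_pos 1).trans_le ht₁
  rw [rpow_three_halves ht₀.le]
  exact ⟨le_vheat ((one_le_exp zero_le_one).trans ht₁) (by linarith)
      (hxt.le.trans (log_le_sqrt ht₀)), vheat_le ht₁ (by linarith)⟩
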